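/- arXiv:1508.00860 — 4 statements merged into one kernel-verified Lean document; each statement's English description precedes it below -/
import Mathlib

section
/- Let d ≥ 2 and let S be the swap operator on ℂ^d ⊗ ℂ^d. For z₁, z₂ ∈ ℂ, the matrix U := z₁ I + z₂ S is unitary if and only if there exist λ ∈ [0,1] and φ ∈ [0,2π) such that z₁ = e^{iφ}√λ and z₂ = ± i e^{iφ}√(1−λ). -/
/-- The swap operator on `ℂ^d ⊗ ℂ^d`. -/
def swapMatrix (d : ℕ) : Matrix (Fin d × Fin d) (Fin d × Fin d) ℂ :=
  fun p q => if p.1 = q.2 ∧ p.2 = q.1 then 1 else 0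

/-!
Since `S` is a self-adjoint involution, `(z₁ I + z₂ S)† (z₁ I + z₂ S)` is again a combination of
`I` and `S`, with coefficients `|z₁|² + |z₂|²` and `2 Re (z̄₁ z₂)`. As `I` and `S` are linearly
independent for `d ≥ 2`, unitarity means `|z₁|² + |z₂|² = 1` and `z̄₁ z₂ ∈ iℝ`. Writing
`z₁ = e^{iφ} |z₁|` (taking the phase from `z₂` when `z₁ = 0`), the second condition says exactly
that `z₂ = ± i e^{iφ} |z₂|`, and `λ = |z₁|²`.
-/

open Complex ComplexConjugate

theorem star_smul_one_add_smul_mul_self {R A : Type*} [CommRing R] [StarRing R] [Ring A]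
    [StarRing A] [Algebra R A] [StarModule R A] {s : A} (hs : IsSelfAdjoint s) (hs2 : s * s = 1)
    (a b : R) :
    star (a • (1 : A) + b • s) * (a • 1 + b • s) =
      (star a * a + star b * b) • 1 + (star a * b + star b * a) • s := by
  simp only [star_add, star_smul, star_one, hs.star_eq, add_mul, mul_add, smul_mul_smul_comm,
    one_mul, mul_one, hs2, add_smul]
  abel

theorem swapMatrix_mul_self (d : ℕ) : swapMatrix d * swapMatrix d = 1 := by
  ext p q
  rw [Matrix.mul_apply, Finset.sum_eq_single (p.2, p.1)]
  · simp [swapMatrix, Matrix.one_apply, Prod.ext_iff, and_comm]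
  · rintro r - hr
    rw [swapMatrix, if_neg, zero_mul]
    rintro ⟨h1, h2⟩
    exact hr (Prod.ext h2.symm h1.symm)
  · simp

theorem isSelfAdjoint_swapMatrix (d : ℕ) : IsSelfAdjoint (swapMatrix d) := by
  ext p q
  simp only [Matrix.star_apply, swapMatrix]
  split_ifs <;> simp_all

theorem linearIndependent_one_swapMatrix {d : ℕ} (hd : 2 ≤ d) :
    LinearIndependent ℂ ![1, swapMatrix d] := by
  refine LinearIndependent.pair_iff.2 fun a b h => ?_
  let i : Fin d := ⟨0, by omega⟩
  let j : Fin d := ⟨1, by omega⟩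
  have hij := congrFun₂ h (i, j) (j, i)
  have hii := congrFun₂ h (i, i) (i, i)
  simp [swapMatrix, i, j] at hij hii
  exact ⟨by linear_combination hii - hij, hij⟩

theorem smul_one_add_smul_swapMatrix_mem_unitaryGroup_iff {d : ℕ} (hd : 2 ≤ d) (z₁ z₂ : ℂ) :
    z₁ • (1 : Matrix (Fin d × Fin d) (Fin d × Fin d) ℂ) + z₂ • swapMatrix d
        ∈ Matrix.unitaryGroup (Fin d × Fin d) ℂ ↔
      conj z₁ * z₁ + conj z₂ * z₂ = 1 ∧ conj z₁ * z₂ + conj z₂ * z₁ = 0 := by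
  rw [Matrix.mem_unitaryGroup_iff', star_smul_one_add_smul_mul_self (isSelfAdjoint_swapMatrix d)
    (swapMatrix_mul_self d)]
  simp only [RCLike.star_def]
  refine ⟨fun h => ?_, fun ⟨h₁, h₂⟩ => by rw [h₁, h₂, one_smul, zero_smul, add_zero]⟩
  obtain ⟨h₁, h₂⟩ := LinearIndependent.pair_iff.1 (linearIndependent_one_swapMatrix hd)
    (conj z₁ * z₁ + conj z₂ * z₂ - 1) (conj z₁ * z₂ + conj z₂ * z₁)
    (by rw [sub_smul, one_smul, sub_add_eq_add_sub, h, sub_self])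
  exact ⟨sub_eq_zero.1 h₁, h₂⟩

theorem exists_mem_Ico_exp_mul_I_eq (θ : ℝ) :
    ∃ φ ∈ Set.Ico 0 (2 * Real.pi), exp (I * φ) = exp (I * θ) := by
  refine ⟨toIcoMod Real.two_pi_pos 0 θ, toIcoMod_mem_Ico' _ θ, ?_⟩
  rw [eq_sub_of_add_eq' (sub_eq_iff_eq_add.1 (self_sub_toIcoMod Real.two_pi_pos 0 θ)).symm,
    ofReal_sub, ofReal_zsmul, ofReal_mul, ofReal_ofNat, mul_comm, mul_comm I]
  exact exp_mul_I_periodic.sub_zsmul_eq _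

theorem exists_mem_Ico_eq_exp_mul_norm (z : ℂ) :
    ∃ φ ∈ Set.Ico 0 (2 * Real.pi), z = exp (I * φ) * ‖z‖ := by
  obtain ⟨φ, hφ, h⟩ := exists_mem_Ico_exp_mul_I_eq z.arg
  refine ⟨φ, hφ, ?_⟩
  rw [h, mul_comm, mul_comm I, norm_mul_exp_arg_mul_I]

theorem exists_mem_Ico_eq_I_mul_exp_mul_norm (z : ℂ) :
    ∃ φ ∈ Set.Ico 0 (2 * Real.pi), z = I * exp (I * φ) * ‖z‖ := by
  obtain ⟨φ, hφ, h⟩ := exists_mem_Ico_eq_exp_mul_norm (-I * z)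
  refine ⟨φ, hφ, ?_⟩
  rw [norm_mul, norm_neg, norm_I, one_mul] at h
  rw [mul_assoc, ← h]
  ring_nf
  rw [I_sq]
  ring

theorem eq_I_mul_mul_norm_or_eq_neg {u z : ℂ} (hu : ‖u‖ = 1) {r : ℝ} (hz : z = I * u * r) :
    z = I * u * ‖z‖ ∨ z = -(I * u * ‖z‖) := by
  have hr : ‖z‖ = |r| := by rw [hz, norm_mul, norm_mul, norm_I, hu, norm_real, Real.norm_eq_abs]; ring
  rw [hr]
  rcases abs_choice r with h | h <;> rw [h]
  · exact Or.inl hz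
  · exact Or.inr (by rw [hz]; push_cast; ring)

theorem exists_phase_of_conj_mul_add_conj_mul_eq_zero {z₁ z₂ : ℂ}
    (h : conj z₁ * z₂ + conj z₂ * z₁ = 0) :
    ∃ φ ∈ Set.Ico 0 (2 * Real.pi), z₁ = exp (I * φ) * ‖z₁‖ ∧
      (z₂ = I * exp (I * φ) * ‖z₂‖ ∨ z₂ = -(I * exp (I * φ) * ‖z₂‖)) := by
  rcases eq_or_ne z₁ 0 with rfl | hz₁
  · obtain ⟨φ, hφ, h₂⟩ := exists_mem_Ico_eq_I_mul_exp_mul_norm z₂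
    exact ⟨φ, hφ, by simp, Or.inl h₂⟩
  obtain ⟨φ, hφ, h₁⟩ := exists_mem_Ico_eq_exp_mul_norm z₁
  set w := z₂ / z₁
  have hz₂ : z₂ = w * z₁ := (div_mul_cancel₀ _ hz₁).symm
  have hw : w.re = 0 := by
    have : (w + conj w) * (conj z₁ * z₁) = 0 := by
      rw [hz₂, map_mul] at h
      linear_combination h
    rw [add_conj, conj_mul', mul_eq_zero] at this
    simpa [hz₁] using this
  refine ⟨φ, hφ, h₁, eq_I_mul_mul_norm_or_eq_neg (r := w.im * ‖z₁‖)
    (by rw [mul_comm, norm_exp_ofReal_mul_I]) ?_⟩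
  have hw' : w = w.im * I := Complex.ext (by simp [hw]) (by simp)
  calc z₂ = w.im * I * z₁ := by rw [hz₂, ← hw']
    _ = I * exp (I * φ) * (w.im * ‖z₁‖ : ℝ) := by nth_rewrite 1 [h₁]; push_cast; ring

theorem conj_mul_self_add_conj_mul_self_eq_one_and_iff (z₁ z₂ : ℂ) :
    (conj z₁ * z₁ + conj z₂ * z₂ = 1 ∧ conj z₁ * z₂ + conj z₂ * z₁ = 0) ↔
      ∃ l ∈ Set.Icc (0:ℝ) 1, ∃ φ ∈ Set.Ico (0:ℝ) (2 * Real.pi),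
        z₁ = exp (I * φ) * (Real.sqrt l : ℂ) ∧
        (z₂ = I * exp (I * φ) * (Real.sqrt (1 - l) : ℂ) ∨
          z₂ = -(I * exp (I * φ) * (Real.sqrt (1 - l) : ℂ))) := by
  constructor
  · rintro ⟨h₁, h₂⟩
    obtain ⟨φ, hφ, hz₁, hz₂⟩ := exists_phase_of_conj_mul_add_conj_mul_eq_zero h₂
    have hnorm : ‖z₁‖ ^ 2 + ‖z₂‖ ^ 2 = 1 := by
      rw [conj_mul', conj_mul'] at h₁
      exact_mod_cast h₁
    have hsqrt₂ : Real.sqrt (1 - ‖z₁‖ ^ 2) = ‖z₂‖ := by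
      rw [← hnorm, add_sub_cancel_left, Real.sqrt_sq (norm_nonneg _)]
    refine ⟨‖z₁‖ ^ 2, ⟨by positivity, by nlinarith [sq_nonneg ‖z₂‖]⟩, φ, hφ, ?_, ?_⟩
    · rwa [Real.sqrt_sq (norm_nonneg _)]
    · rwa [hsqrt₂]
  · rintro ⟨l, ⟨hl₀, hl₁⟩, φ, -, rfl, h₂⟩
    obtain ⟨s, hs, rfl⟩ : ∃ s : ℝ, s ^ 2 = 1 ∧ z₂ = s * (I * exp (I * φ) * Real.sqrt (1 - l)) := by
      rcases h₂ with h | h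
      · exact ⟨1, one_pow 2, by simp [h]⟩
      · exact ⟨-1, by norm_num, by simp [h]⟩
    have hu : conj (exp (I * φ)) * exp (I * φ) = 1 := by
      rw [conj_mul', mul_comm, norm_exp_ofReal_mul_I]; simp
    have hab : (Real.sqrt l : ℂ) ^ 2 + (Real.sqrt (1 - l) : ℂ) ^ 2 = 1 := by
      exact_mod_cast (by rw [Real.sq_sqrt hl₀, Real.sq_sqrt (by linarith)]; ring :
        Real.sqrt l ^ 2 + Real.sqrt (1 - l) ^ 2 = 1)
    have hs' : (s : ℂ) ^ 2 = 1 := by exact_mod_cast hs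
    simp only [map_mul, conj_ofReal, conj_I]
    constructor
    · linear_combination (Real.sqrt l ^ 2 - I ^ 2 * s ^ 2 * Real.sqrt (1 - l) ^ 2 : ℂ) * hu
        + hab + (Real.sqrt (1 - l) : ℂ) ^ 2 * hs' - (s * Real.sqrt (1 - l) : ℂ) ^ 2 * I_sq
    · ring

theorem stmt_1 (d : ℕ) (hd : 2 ≤ d) (z₁ z₂ : ℂ) :
    (z₁ • (1 : Matrix (Fin d × Fin d) (Fin d × Fin d) ℂ) + z₂ • swapMatrix d)
      ∈ Matrix.unitaryGroup (Fin d × Fin d) ℂ ↔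
    ∃ l ∈ Set.Icc (0:ℝ) 1, ∃ φ ∈ Set.Ico (0:ℝ) (2 * Real.pi),
      z₁ = Complex.exp (Complex.I * φ) * (Real.sqrt l : ℂ) ∧
      (z₂ = Complex.I * Complex.exp (Complex.I * φ) * (Real.sqrt (1 - l) : ℂ) ∨
       z₂ = -(Complex.I * Complex.exp (Complex.I * φ) * (Real.sqrt (1 - l) : ℂ))) := by
  rw [smul_one_add_smul_swapMatrix_mem_unitaryGroup_iff hd,
    conj_mul_self_add_conj_mul_self_eq_one_and_iff]
end

section
/- For density matrices ρ₁, ρ₂ on ℂ^d and λ ∈ [0,1], the partial trace over the second system of U_λ (ρ₁ ⊗ ρ₂) U_λ† equals λρ₁ + (1−λ)ρ₂ + √(λ(1−λ)) · i[ρ₂, ρ₁], where U_λ = √λ I + i√(1−λ) S. -/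
/-- Partial trace over the second tensor factor. -/
noncomputable def ptrace2 {d : ℕ} (M : Matrix (Fin d × Fin d) (Fin d × Fin d) ℂ) :
    Matrix (Fin d) (Fin d) ℂ :=
  fun i k => ∑ j : Fin d, M (i, j) (k, j)

open Matrix Kronecker

section

variable {d : ℕ}

lemma ptrace2_add (M N : Matrix (Fin d × Fin d) (Fin d × Fin d) ℂ) :
    ptrace2 (M + N) = ptrace2 M + ptrace2 N := by
  ext i k
  simp [ptrace2, Finset.sum_add_distrib]

lemma ptrace2_smul (c : ℂ) (M : Matrix (Fin d × Fin d) (Fin d × Fin d) ℂ) :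
    ptrace2 (c • M) = c • ptrace2 M := by
  ext i k
  simp [ptrace2, Finset.mul_sum]

lemma ptrace2_kronecker (A B : Matrix (Fin d) (Fin d) ℂ) :
    ptrace2 (A ⊗ₖ B) = B.trace • A := by
  ext i k
  simp [ptrace2, trace, Finset.sum_mul, mul_comm (A i k)]

lemma ptrace2_swapMatrix_mul_kronecker (A B : Matrix (Fin d) (Fin d) ℂ) :
    ptrace2 (swapMatrix d * (A ⊗ₖ B)) = B * A := by
  ext i k
  simp [ptrace2, mul_apply, swapMatrix, Fintype.sum_prod_type, ite_and, mul_comm]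

lemma ptrace2_kronecker_mul_swapMatrix (A B : Matrix (Fin d) (Fin d) ℂ) :
    ptrace2 ((A ⊗ₖ B) * swapMatrix d) = A * B := by
  ext i k
  simp [ptrace2, mul_apply, swapMatrix, Fintype.sum_prod_type, ite_and]

lemma swapMatrix_mul_kronecker_mul_swapMatrix (A B : Matrix (Fin d) (Fin d) ℂ) :
    swapMatrix d * (A ⊗ₖ B) * swapMatrix d = B ⊗ₖ A := by
  ext ⟨i, j⟩ ⟨k, l⟩
  simp [mul_apply, swapMatrix, Fintype.sum_prod_type, ite_and, mul_comm]

lemma swapMatrix_conjTranspose : (swapMatrix d)ᴴ = swapMatrix d := by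
  ext p q
  simp only [conjTranspose_apply, swapMatrix]
  split_ifs <;> simp_all [eq_comm]

lemma ptrace2_conj_kronecker (a b : ℂ) (A B : Matrix (Fin d) (Fin d) ℂ) :
    let U := a • (1 : Matrix (Fin d × Fin d) (Fin d × Fin d) ℂ) + b • swapMatrix d
    ptrace2 (U * (A ⊗ₖ B) * Uᴴ)
      = (a * star a * B.trace) • A + (b * star b * A.trace) • B
        + (a * star b) • (A * B) + (b * star a) • (B * A) := by
  intro U
  have hUH : Uᴴ = star a • 1 + star b • swapMatrix d := by
    simp [U, conjTranspose_add, conjTranspose_smul, swapMatrix_conjTranspose]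
  have expand : U * (A ⊗ₖ B) * Uᴴ
      = (a * star a) • (A ⊗ₖ B) + (a * star b) • ((A ⊗ₖ B) * swapMatrix d)
        + (b * star a) • (swapMatrix d * (A ⊗ₖ B))
        + (b * star b) • (swapMatrix d * (A ⊗ₖ B) * swapMatrix d) := by
    simp only [hUH, U, add_mul, mul_add, Matrix.smul_mul, Matrix.mul_smul, one_mul, mul_one,
      smul_smul]
    module
  rw [expand, swapMatrix_mul_kronecker_mul_swapMatrix]
  simp only [ptrace2_add, ptrace2_smul, ptrace2_kronecker, ptrace2_swapMatrix_mul_kronecker,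
    ptrace2_kronecker_mul_swapMatrix, smul_smul]
  abel

end

open Matrix Kronecker ComplexOrder in
theorem stmt_3_general (d : ℕ) (l : ℝ) (hl : l ∈ Set.Icc (0:ℝ) 1)
    (ρ₁ ρ₂ : Matrix (Fin d) (Fin d) ℂ)
    (h₁t : ρ₁.trace = 1)
    (h₂t : ρ₂.trace = 1) :
    let U := (Real.sqrt l : ℂ) • (1 : Matrix (Fin d × Fin d) (Fin d × Fin d) ℂ)
      + (Complex.I * (Real.sqrt (1 - l) : ℂ)) • swapMatrix d
    ptrace2 (U * (ρ₁ ⊗ₖ ρ₂) * Uᴴ)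
      = (l : ℂ) • ρ₁ + ((1 - l : ℝ) : ℂ) • ρ₂
        + ((Real.sqrt (l * (1 - l)) : ℂ) * Complex.I) • (ρ₂ * ρ₁ - ρ₁ * ρ₂) := by
  have hl₀ : 0 ≤ l := hl.1
  have hl' : 0 ≤ 1 - l := sub_nonneg.mpr hl.2
  have ha_sq : (√l : ℂ) * star (√l : ℂ) = (l : ℂ) := by
    simp [← Complex.ofReal_mul, Real.mul_self_sqrt hl₀]
  have hb_sq : Complex.I * (√(1 - l) : ℂ) * star (Complex.I * (√(1 - l) : ℂ))
      = ((1 - l : ℝ) : ℂ) := by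
    simp [Complex.ext_iff, Real.mul_self_sqrt hl']
  have hab : (√l : ℂ) * star (Complex.I * (√(1 - l) : ℂ))
      = -((√(l * (1 - l)) : ℂ) * Complex.I) := by
    simp [Complex.ext_iff, Real.sqrt_mul hl₀]
  have hba : Complex.I * (√(1 - l) : ℂ) * star (√l : ℂ)
      = (√(l * (1 - l)) : ℂ) * Complex.I := by
    simp [Complex.ext_iff, Real.sqrt_mul hl₀, mul_comm]
  dsimp only
  rw [ptrace2_conj_kronecker, h₁t, h₂t, ha_sq, hb_sq, hab, hba, smul_sub, neg_smul]
  simp only [mul_one]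
  abel

open Matrix Kronecker ComplexOrder in
theorem stmt_3 (d : ℕ) (l : ℝ) (hl : l ∈ Set.Icc (0:ℝ) 1)
    (ρ₁ ρ₂ : Matrix (Fin d) (Fin d) ℂ)
    (h₁ : ρ₁.PosSemidef) (h₁t : ρ₁.trace = 1)
    (h₂ : ρ₂.PosSemidef) (h₂t : ρ₂.trace = 1) :
    let U := (Real.sqrt l : ℂ) • (1 : Matrix (Fin d × Fin d) (Fin d × Fin d) ℂ)
      + (Complex.I * (Real.sqrt (1 - l) : ℂ)) • swapMatrix d
    ptrace2 (U * (ρ₁ ⊗ₖ ρ₂) * Uᴴ)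
      = (l : ℂ) • ρ₁ + ((1 - l : ℝ) : ℂ) • ρ₂
        + ((Real.sqrt (l * (1 - l)) : ℂ) * Complex.I) • (ρ₂ * ρ₁ - ρ₁ * ρ₂) :=
  stmt_3_general d l hl ρ₁ ρ₂ h₁t h₂t
end

section
/- Let n ≥ 1, d ≥ n, and z_π ∈ ℂ for π ∈ S_n. Then Σ_π z_π Q_π is unitary on (ℂ^d)^{⊗n} if and only if Σ_π z_π L_π is unitary on ℂ^{S_n}, where L is the left regular representation of S_n. -/
/-!
Both sums are images of `a = Σ z_π π ∈ ℂ[S_n]` under permutation representations `ρ` with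
`ρ(π)ᴴ = ρ(π⁻¹)`, so `(Σ z_π ρ π)ᴴ (Σ z_π ρ π) = Σ_σ c_σ ρ σ`, where `c_σ = Σ_π conj(z_π) z_{πσ}`
are the coefficients of `a⋆a`. If some point has a free orbit, the matrices `ρ σ` are linearly
independent (compare entries in the column of that point), so unitarity is equivalent to `c = δ₁`.
This applies to both representations: `1` has a free orbit under left multiplication, and for
`d ≥ n` so does the injection `Fin n ↪ Fin d` under `π • y = y ∘ π⁻¹`.
-/

/-- The tensor (permutation) representation of `S_n` on `(ℂ^d)^{⊗n}`. -/
def tensorPerm (n d : ℕ) (π : Equiv.Perm (Fin n)) :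
    Matrix (Fin n → Fin d) (Fin n → Fin d) ℂ :=
  fun x y => if x = y ∘ (π⁻¹ : Equiv.Perm (Fin n)) then 1 else 0

/-- The left regular representation of `S_n`: `L_π |σ⟩ = |π σ⟩`. -/
def leftRegPerm (n : ℕ) (π : Equiv.Perm (Fin n)) :
    Matrix (Equiv.Perm (Fin n)) (Equiv.Perm (Fin n)) ℂ :=
  fun x y => if x = π * y then 1 else 0

open Finset Matrix

section Autocorrelation

variable {G X : Type*} [Group G] [Fintype G] [Fintype X] [DecidableEq X]

def autocorr (z : G → ℂ) (σ : G) : ℂ :=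
  ∑ π, star (z π) * z (π * σ)

theorem star_sum_smul_mul_sum_smul (ρ : G →* Matrix X X ℂ) (hρ : ∀ g, star (ρ g) = ρ g⁻¹)
    (z : G → ℂ) :
    star (∑ π, z π • ρ π) * ∑ π, z π • ρ π = ∑ σ, autocorr z σ • ρ σ := by
  calc star (∑ π, z π • ρ π) * ∑ π, z π • ρ π
      = ∑ π, ∑ τ, (star (z π) * z τ) • ρ (π⁻¹ * τ) := by
        simp only [star_sum, star_smul, hρ, sum_mul_sum, smul_mul_smul_comm, map_mul]
    _ = ∑ π, ∑ σ, (star (z π) * z (π * σ)) • ρ σ := by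
        refine sum_congr rfl fun π _ => ?_
        rw [← Equiv.sum_comp (Equiv.mulLeft π)]
        simp
    _ = ∑ σ, autocorr z σ • ρ σ := by
        simp only [autocorr, sum_smul]
        exact sum_comm

theorem sum_smul_mem_unitaryGroup_iff [DecidableEq G] (ρ : G →* Matrix X X ℂ)
    (hρ : ∀ g, star (ρ g) = ρ g⁻¹) (hli : LinearIndependent ℂ ρ) (z : G → ℂ) :
    ∑ π, z π • ρ π ∈ unitaryGroup X ℂ ↔ autocorr z = Pi.single 1 1 := by
  have h_one : (1 : Matrix X X ℂ) = ∑ σ, (Pi.single 1 1 : G → ℂ) σ • ρ σ := by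
    simp [Pi.single_apply]
  rw [mem_unitaryGroup_iff', star_sum_smul_mul_sum_smul ρ hρ, h_one,
    ← Fintype.linearCombination_apply, ← Fintype.linearCombination_apply]
  exact hli.fintypeLinearCombination_injective.eq_iff

end Autocorrelation

section ActionMatrix

variable {G X : Type*} [Group G] [Fintype X] [DecidableEq X] [MulAction G X]

def actionMatrix : G →* Matrix X X ℂ where
  toFun g := of fun x y => if x = g • y then 1 else 0
  map_one' := by
    ext x y
    simp [one_apply]
  map_mul' g h := by
    ext x y
    simp [mul_apply, mul_smul]

theorem actionMatrix_apply (g : G) (x y : X) :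
    (actionMatrix g : Matrix X X ℂ) x y = if x = g • y then 1 else 0 :=
  rfl

theorem star_actionMatrix (g : G) : star (actionMatrix g : Matrix X X ℂ) = actionMatrix g⁻¹ := by
  ext x y
  simp [actionMatrix_apply, eq_inv_smul_iff, eq_comm]

theorem linearIndependent_actionMatrix [Fintype G] {x₀ : X}
    (hx₀ : Function.Injective (· • x₀ : G → X)) :
    LinearIndependent ℂ (actionMatrix : G →* Matrix X X ℂ) := by
  rw [Fintype.linearIndependent_iff]
  intro c hc g
  calc c g = ∑ σ, c σ * actionMatrix σ (g • x₀) x₀ := by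
        rw [Fintype.sum_eq_single g fun σ hσ => by simp [actionMatrix_apply, (hx₀.ne hσ).symm]]
        simp [actionMatrix_apply]
    _ = 0 := by simpa [Matrix.sum_apply] using congr($hc (g • x₀) x₀)

end ActionMatrix

theorem leftRegPerm_eq_actionMatrix (n : ℕ) : leftRegPerm n = actionMatrix :=
  rfl

section Tensor

attribute [local instance] arrowAction

theorem tensorPerm_eq_actionMatrix (n d : ℕ) : tensorPerm n d = actionMatrix :=
  rfl

theorem injective_smul_castLE {n d : ℕ} (hd : n ≤ d) :
    Function.Injective (· • Fin.castLE hd : Equiv.Perm (Fin n) → Fin n → Fin d) := by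
  intro g h hgh
  have : ⇑g⁻¹ = ⇑h⁻¹ := (Fin.castLE_injective hd).comp_left hgh
  exact inv_injective (DFunLike.coe_injective this)

theorem sum_smul_tensorPerm_mem_unitaryGroup_iff {n d : ℕ} (hd : n ≤ d)
    (z : Equiv.Perm (Fin n) → ℂ) :
    ∑ π, z π • tensorPerm n d π ∈ unitaryGroup (Fin n → Fin d) ℂ ↔ autocorr z = Pi.single 1 1 := by
  rw [tensorPerm_eq_actionMatrix]
  exact sum_smul_mem_unitaryGroup_iff _ star_actionMatrix
    (linearIndependent_actionMatrix (injective_smul_castLE hd)) z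

end Tensor

theorem sum_smul_leftRegPerm_mem_unitaryGroup_iff {n : ℕ} (z : Equiv.Perm (Fin n) → ℂ) :
    ∑ π, z π • leftRegPerm n π ∈ unitaryGroup (Equiv.Perm (Fin n)) ℂ ↔
      autocorr z = Pi.single 1 1 := by
  rw [leftRegPerm_eq_actionMatrix]
  exact sum_smul_mem_unitaryGroup_iff _ star_actionMatrix
    (linearIndependent_actionMatrix (mul_left_injective 1)) z

theorem stmt_14_general (n d : ℕ) (hd : n ≤ d)
    (z : Equiv.Perm (Fin n) → ℂ) :
    (∑ π : Equiv.Perm (Fin n), z π • tensorPerm n d π)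
        ∈ Matrix.unitaryGroup (Fin n → Fin d) ℂ ↔
    (∑ π : Equiv.Perm (Fin n), z π • leftRegPerm n π)
        ∈ Matrix.unitaryGroup (Equiv.Perm (Fin n)) ℂ :=
  (sum_smul_tensorPerm_mem_unitaryGroup_iff hd z).trans
    (sum_smul_leftRegPerm_mem_unitaryGroup_iff z).symm

theorem stmt_14 (n d : ℕ) (hn : 1 ≤ n) (hd : n ≤ d)
    (z : Equiv.Perm (Fin n) → ℂ) :
    (∑ π : Equiv.Perm (Fin n), z π • tensorPerm n d π)
        ∈ Matrix.unitaryGroup (Fin n → Fin d) ℂ ↔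
    (∑ π : Equiv.Perm (Fin n), z π • leftRegPerm n π)
        ∈ Matrix.unitaryGroup (Equiv.Perm (Fin n)) ℂ :=
  stmt_14_general n d hd z
end

section
/- Let 0 ≤ a ≤ b ≤ c ≤ 1 with a² + b² + c² = 1. If c ≤ 2/3 then a + 1 ≥ b + c, i.e., the Grashof condition a + 1 < b + c fails. -/
/-!
Since `b, c ≤ 2/3`, the constraint forces `a² ≥ 1 - 8/9`, so `a ≥ 1/3`. Then
`(b + c)² ≤ 2 (b² + c²) = 2 (1 - a²) ≤ (1 + a)²`, the last step being `(3a - 1)(a + 1) ≥ 0`.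
If `b ≤ 0` the claim is immediate from `c ≤ 2/3`.
-/

lemma one_third_le_of_sq_add_sq_add_sq_eq_one {a b c : ℝ} (ha : 0 ≤ a) (hb : 0 ≤ b) (hc : 0 ≤ c)
    (hb₂ : b ≤ 2 / 3) (hc₂ : c ≤ 2 / 3) (h : a ^ 2 + b ^ 2 + c ^ 2 = 1) : 1 / 3 ≤ a := by
  have hb_sq : b ^ 2 ≤ (2 / 3) ^ 2 := pow_le_pow_left₀ hb hb₂ 2
  have hc_sq : c ^ 2 ≤ (2 / 3) ^ 2 := pow_le_pow_left₀ hc hc₂ 2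
  have ha_sq : (1 / 3) ^ 2 ≤ a ^ 2 := by linarith
  exact (pow_le_pow_iff_left₀ (by norm_num) ha two_ne_zero).mp ha_sq

lemma add_le_one_add_of_sq_add_sq_add_sq_eq_one {a b c : ℝ} (ha : 1 / 3 ≤ a)
    (h : a ^ 2 + b ^ 2 + c ^ 2 = 1) : b + c ≤ 1 + a := by
  have hsq : (b + c) ^ 2 ≤ (1 + a) ^ 2 :=
    calc (b + c) ^ 2 ≤ 2 * (b ^ 2 + c ^ 2) := add_sq_le
      _ = 2 * (1 - a ^ 2) := by rw [← h]; ring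
      _ ≤ (1 + a) ^ 2 := by nlinarith
  exact (le_abs_self _).trans (abs_le_of_sq_le_sq hsq (by linarith))

theorem stmt_19_general (a b c : ℝ) (h0 : 0 ≤ a) (hbc : b ≤ c)
    (hsum : a ^ 2 + b ^ 2 + c ^ 2 = 1) (hc : c ≤ 2 / 3) :
    a + 1 ≥ b + c := by
  rcases le_or_gt b 0 with hb | hb
  · linarith
  have ha := one_third_le_of_sq_add_sq_add_sq_eq_one h0 hb.le (hb.le.trans hbc)
    (hbc.trans hc) hc hsum
  linarith [add_le_one_add_of_sq_add_sq_add_sq_eq_one ha hsum]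

theorem stmt_19 (a b c : ℝ) (h0 : 0 ≤ a) (hab : a ≤ b) (hbc : b ≤ c) (hc1 : c ≤ 1)
    (hsum : a ^ 2 + b ^ 2 + c ^ 2 = 1) (hc : c ≤ 2 / 3) :
    a + 1 ≥ b + c :=
  stmt_19_general a b c h0 hbc hsum hc
end
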